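/- Let α ∈ (0,1), λ ≥ 0, T > 0, and g ∈ C¹([0,T]). Define u(t) = ∫_0^t (t−s)^{α−1} E_{α,α}(−λ (t−s)^α) g(s) ds. Then u is differentiable on (0,T) with u'(t) = g(0) t^{α−1} E_{α,α}(−λ t^α) + ∫_0^t s^{α−1} E_{α,α}(−λ s^α) g'(t−s) ds. -/

import Mathlib

/-!
Substituting `s ↦ τ - s` and writing `g (τ - x) = g 0 + ∫₀^{τ-x} g'` splits `u τ` into
`g 0 * ∫₀^τ K` plus, after exchanging the order of integration over the triangle
`0 ≤ x ≤ y ≤ τ`, the primitive `∫₀^τ Φ` of `Φ y = ∫₀^y K x * g' (y - x) dx`, where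
`K s = s ^ (α - 1) * E_{α,α} (-λ s ^ α)`. Both integrands are continuous at `t`: `K` away from
its singularity at `0`, and `Φ` by dominated convergence, because that singularity is integrable.
The Mittag-Leffler series converges locally uniformly by the ratio test, since log-convexity of
`Γ` gives `Γ y / Γ (y + a) → 0`.
-/

/-- The Mittag-Leffler function `E_{a,b}(x) = ∑ xᵏ / Γ(a k + b)` (real version). -/
noncomputable def ML (a b x : ℝ) : ℝ := ∑' k : ℕ, x ^ k / Real.Gamma (a * k + b)

open MeasureTheory Set Filter Topology intervalIntegral Function Interval

namespace Real

theorem Gamma_add_one_le_Gamma_add_mul_rpow {a y : ℝ} (ha : 0 < a) (ha1 : a < 1) (hy : 0 < y) :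
    Gamma (y + 1) ≤ Gamma (y + a) * (y + a) ^ (1 - a) := by
  have hya : 0 < y + a := by linarith
  have hΓ : 0 ≤ Gamma (y + a) := (Gamma_pos_of_pos hya).le
  calc Gamma (y + 1) = Gamma (a * (y + a) + (1 - a) * (y + a + 1)) := by
        congr 1; ring
    _ ≤ Gamma (y + a) ^ a * Gamma (y + a + 1) ^ (1 - a) :=
      Gamma_mul_add_mul_le_rpow_Gamma_mul_rpow_Gamma hya (by linarith) ha (by linarith) (by ring)
    _ = Gamma (y + a) * (y + a) ^ (1 - a) := by
      rw [Gamma_add_one hya.ne', mul_rpow hya.le hΓ, mul_left_comm,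
        ← rpow_add_of_nonneg hΓ ha.le (by linarith), add_sub_cancel, rpow_one, mul_comm]

theorem tendsto_Gamma_div_Gamma_add {a : ℝ} (ha : 0 < a) (ha1 : a < 1) :
    Tendsto (fun y => Gamma y / Gamma (y + a)) atTop (𝓝 0) := by
  have hupper : Tendsto (fun y => (y + a) ^ (-a) * (1 + a / y)) atTop (𝓝 0) := by
    have h1 := (tendsto_rpow_neg_atTop ha).comp (tendsto_atTop_add_const_right _ a tendsto_id)
    have h2 := (tendsto_const_nhds (x := a)).div_atTop tendsto_id
    simpa using h1.mul (h2.const_add 1)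
  refine tendsto_of_tendsto_of_tendsto_of_le_of_le' tendsto_const_nhds hupper ?_ ?_
  · filter_upwards [eventually_gt_atTop 0] with y hy
    exact div_nonneg (Gamma_pos_of_pos hy).le (Gamma_pos_of_pos (by linarith)).le
  · filter_upwards [eventually_gt_atTop 0] with y hy
    have hya : 0 < y + a := by linarith
    have key := Gamma_add_one_le_Gamma_add_mul_rpow ha ha1 hy
    rw [Gamma_add_one hy.ne'] at key
    calc Gamma y / Gamma (y + a) ≤ (y + a) ^ (1 - a) / y := by
          rw [div_le_div_iff₀ (Gamma_pos_of_pos hya) hy]; linarith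
      _ = (y + a) ^ (-a) * (1 + a / y) := by
          rw [sub_eq_add_neg, rpow_add hya, rpow_one]; field_simp

end Real

theorem summable_pow_div_Gamma {a b : ℝ} (ha : 0 < a) (ha1 : a < 1) (hb : 0 < b) (x : ℝ) :
    Summable fun k : ℕ => x ^ k / Real.Gamma (a * k + b) := by
  have hlin : Tendsto (fun k : ℕ => a * k + b) atTop atTop :=
    tendsto_atTop_add_const_right _ b (tendsto_natCast_atTop_atTop.const_mul_atTop ha)
  have hratio := ((Real.tendsto_Gamma_div_Gamma_add ha ha1).comp hlin).const_mul |x|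
  rw [mul_zero] at hratio
  refine summable_of_ratio_norm_eventually_le (r := 1 / 2) (by norm_num) ?_
  filter_upwards [hratio.eventually_le_const (by norm_num : (0:ℝ) < 1 / 2)] with k hk
  have hy : 0 < a * k + b := by positivity
  have hΓ := Real.Gamma_pos_of_pos hy
  have hΓ' : 0 < Real.Gamma (a * k + b + a) := Real.Gamma_pos_of_pos (by linarith)
  simp only [Function.comp_apply] at hk
  rw [Nat.cast_succ, show a * (k + 1 : ℝ) + b = a * k + b + a by ring]
  simp only [norm_div, norm_pow, Real.norm_eq_abs, abs_of_pos hΓ, abs_of_pos hΓ']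
  calc |x| ^ (k + 1) / Real.Gamma (a * k + b + a)
      = |x| * (Real.Gamma (a * k + b) / Real.Gamma (a * k + b + a))
          * (|x| ^ k / Real.Gamma (a * k + b)) := by
        field_simp; ring
    _ ≤ 1 / 2 * (|x| ^ k / Real.Gamma (a * k + b)) := by gcongr

theorem continuous_ML {a b : ℝ} (ha : 0 < a) (ha1 : a < 1) (hb : 0 < b) :
    Continuous (ML a b) := by
  rw [continuous_iff_continuousAt]
  intro x
  have hR : Icc (-(|x| + 1)) (|x| + 1) ∈ 𝓝 x :=
    Icc_mem_nhds (by linarith [neg_abs_le x]) (by linarith [le_abs_self x])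
  refine ContinuousOn.continuousAt ?_ hR
  refine continuousOn_tsum (fun k => by fun_prop) (summable_pow_div_Gamma ha ha1 hb (|x| + 1))
    fun k y hy => ?_
  have hΓ := Real.Gamma_pos_of_pos (by positivity : 0 < a * k + b)
  rw [norm_div, norm_pow, Real.norm_eq_abs, Real.norm_eq_abs, abs_of_pos hΓ]
  gcongr
  exact abs_le.2 hy

theorem continuousOn_rpow_mul_ML {α : ℝ} (hα : 0 < α) (hα1 : α < 1) (lam : ℝ) :
    ContinuousOn (fun s => s ^ (α - 1) * ML α α (-lam * s ^ α)) (Ioi 0) := by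
  intro s hs
  have h1 : ContinuousAt (fun s : ℝ => s ^ (α - 1)) s :=
    Real.continuousAt_rpow_const s _ (Or.inl (ne_of_gt hs))
  exact (h1.mul ((continuous_ML hα hα1 hα).comp
    (continuous_const.mul (Real.continuous_rpow_const hα.le))).continuousAt).continuousWithinAt

theorem integrableOn_rpow_mul_ML {α : ℝ} (hα : 0 < α) (hα1 : α < 1) (lam T : ℝ) :
    IntegrableOn (fun s => s ^ (α - 1) * ML α α (-lam * s ^ α)) (Ioc 0 T) := by
  have hrpow : IntegrableOn (fun s : ℝ => s ^ (α - 1)) (Icc 0 T) :=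
    (integrableOn_Icc_iff_integrableOn_Ioc (by simp)).2
      (intervalIntegrable_rpow' (by linarith)).1
  have hML : ContinuousOn (fun s => ML α α (-lam * s ^ α)) (Icc 0 T) :=
    ((continuous_ML hα hα1 hα).comp
      (continuous_const.mul (Real.continuous_rpow_const hα.le))).continuousOn
  exact (hrpow.mul_continuousOn hML isCompact_Icc).mono_set Ioc_subset_Icc_self

theorem integral_integral_swap_triangle {E : Type*} [NormedAddCommGroup E] [NormedSpace ℝ E]
    {f : ℝ → ℝ → E} {a b : ℝ} (hab : a ≤ b)
    (hf : IntegrableOn (uncurry f) (Ioc a b ×ˢ Ioc a b)) :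
    ∫ x in a..b, ∫ y in x..b, f x y = ∫ y in a..b, ∫ x in a..y, f x y := by
  set μ := volume.restrict (Ioc a b)
  set F : ℝ → ℝ → E := fun x y => (Ici x).indicator (f x) y
  have hF : Integrable (uncurry F) (μ.prod μ) := by
    have : uncurry F = {p : ℝ × ℝ | p.1 ≤ p.2}.indicator (uncurry f) := by
      ext ⟨x, y⟩; simp [F, indicator_apply]
    rw [this, Measure.prod_restrict, ← Measure.volume_eq_prod]
    exact hf.indicator (measurableSet_le measurable_fst measurable_snd)
  have hleft : ∀ x ∈ Ioc a b, ∫ y, F x y ∂μ = ∫ y in x..b, f x y := by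
    intro x hx
    have hset : Ioc a b ∩ Ici x = Icc x b := by
      ext y; simp only [mem_inter_iff, mem_Ioc, mem_Ici, mem_Icc]; grind
    rw [setIntegral_indicator measurableSet_Ici, hset, integral_Icc_eq_integral_Ioc,
      integral_of_le hx.2]
  have hright : ∀ y ∈ Ioc a b, ∫ x, F x y ∂μ = ∫ x in a..y, f x y := by
    intro y hy
    have hF' : (fun x => F x y) = (Iic y).indicator (fun x => f x y) := by
      ext x; simp [F, indicator_apply]
    rw [hF', setIntegral_indicator measurableSet_Iic, Ioc_inter_Iic, inf_eq_right.2 hy.2,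
      integral_of_le hy.1.le]
  calc ∫ x in a..b, ∫ y in x..b, f x y = ∫ x, ∫ y, F x y ∂μ ∂μ := by
        rw [integral_of_le hab]
        exact setIntegral_congr_fun measurableSet_Ioc fun x hx => (hleft x hx).symm
    _ = ∫ y, ∫ x, F x y ∂μ ∂μ := integral_integral_swap hF
    _ = ∫ y in a..b, ∫ x in a..y, f x y := by
        rw [integral_of_le hab]; exact setIntegral_congr_fun measurableSet_Ioc hright

section CausalConvolution

variable {K ψ g : ℝ → ℝ} {T : ℝ}

theorem integrableOn_mul_comp_sub {a b : ℝ} (hK : IntegrableOn K (Ioc a b))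
    (hψ : Continuous ψ) :
    IntegrableOn (uncurry fun x y => K x * ψ (y - x)) (Ioc a b ×ˢ Ioc a b) := by
  obtain ⟨C, hC⟩ := (isCompact_Icc (a := a - b) (b := b - a)).exists_bound_of_continuousOn
    hψ.continuousOn
  have hψ' : Continuous fun p : ℝ × ℝ => ψ (p.2 - p.1) := by fun_prop
  refine Integrable.mul_bdd ?_ hψ'.aestronglyMeasurable
    (ae_restrict_of_forall_mem (measurableSet_Ioc.prod measurableSet_Ioc) fun p hp => hC _ ?_)
  · rw [Measure.volume_eq_prod, ← Measure.prod_restrict]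
    exact hK.comp_fst _
  · obtain ⟨⟨hx₁, hx₂⟩, hy₁, hy₂⟩ := hp
    constructor <;> linarith

theorem continuousOn_integral_mul_comp_sub (hK : IntegrableOn K (Ioc 0 T)) (hψ : Continuous ψ) :
    ContinuousOn (fun y => ∫ x in 0..y, K x * ψ (y - x)) (Ico 0 T) := by
  intro y₀ hy₀
  -- `K'` is integrable on all of `ℝ`, so `0` may be an interior point of the dominating interval.
  set K' := (Ioc 0 T).indicator K
  have hK' : Integrable K' := hK.integrable_indicator measurableSet_Ioc
  obtain ⟨C, hC⟩ := (isCompact_Icc (a := -(T + 1)) (b := T + 1)).exists_bound_of_continuousOn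
    hψ.continuousOn
  have hcont : ContinuousAt (fun y => ∫ x in 0..y, K' x * ψ (y - x)) y₀ := by
    have hbound : ∀ᶠ y in 𝓝 y₀, ∀ᵐ x ∂volume.restrict (Ι (-1) T),
        ‖K' x * ψ (y - x)‖ ≤ ‖K' x‖ * C := by
      filter_upwards [Ioo_mem_nhds (by linarith [hy₀.1] : -1 < y₀) hy₀.2] with y hy
      refine ae_restrict_of_forall_mem measurableSet_uIoc fun x hx => ?_
      rw [uIoc_of_le (by linarith [hy₀.1, hy₀.2])] at hx
      rw [norm_mul]
      gcongr
      exact hC _ ⟨by linarith [hx.2, hy.1], by linarith [hx.1, hy.2]⟩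
    have hmeas : ∀ y,
        AEStronglyMeasurable (fun x => K' x * ψ (y - x)) (volume.restrict (Ι (-1) T)) := fun y =>
      (hK'.1.mul (by fun_prop : Continuous fun x => ψ (y - x)).aestronglyMeasurable).restrict
    have h := continuousAt_parametric_primitive_of_dominated (F := fun y x => K' x * ψ (y - x))
      (a₀ := 0) (x₀ := y₀) _ (-1) T hmeas hbound (hK'.norm.mul_const C).intervalIntegrable
      (ae_of_all _ fun x => by fun_prop) ⟨by norm_num, by linarith [hy₀.1, hy₀.2]⟩
      ⟨by linarith [hy₀.1], hy₀.2⟩ (measure_singleton _)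
    exact h.comp (f := fun y => (y, y)) (continuousAt_id.prodMk continuousAt_id)
  have heq : ∀ y ∈ Ico 0 T,
      ∫ x in 0..y, K x * ψ (y - x) = ∫ x in 0..y, K' x * ψ (y - x) := by
    refine fun y hy => integral_congr_ae (ae_of_all _ fun x hx => ?_)
    rw [uIoc_of_le hy.1] at hx
    rw [show K' x = K x from indicator_of_mem (s := Ioc 0 T) ⟨hx.1, hx.2.trans hy.2.le⟩ K]
  exact hcont.continuousWithinAt.congr heq (heq y₀ hy₀)

theorem integral_comp_sub_mul_eq {τ : ℝ} (hτ : 0 ≤ τ) (hK : IntegrableOn K (Ioc 0 τ))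
    (hψ : Continuous ψ) (hg : ∀ y ∈ Icc 0 τ, g y = g 0 + ∫ r in 0..y, ψ r) :
    ∫ s in 0..τ, K (τ - s) * g s
      = g 0 * (∫ s in 0..τ, K s) + ∫ y in 0..τ, ∫ x in 0..y, K x * ψ (y - x) := by
  have hprim : Continuous fun x => ∫ r in 0..τ - x, ψ r :=
    (continuous_primitive (fun _ _ => hψ.intervalIntegrable _ _) 0).comp (by fun_prop)
  have hKψ : IntervalIntegrable (fun x => K x * ∫ r in 0..τ - x, ψ r) volume 0 τ :=
    (intervalIntegrable_iff_integrableOn_Icc_of_le hτ).2 <|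
      ((integrableOn_Icc_iff_integrableOn_Ioc (by simp)).2 hK).mul_continuousOn
        hprim.continuousOn isCompact_Icc
  have hK' : IntervalIntegrable K volume 0 τ :=
    (intervalIntegrable_iff_integrableOn_Ioc_of_le hτ).2 hK
  calc ∫ s in 0..τ, K (τ - s) * g s = ∫ x in 0..τ, K x * g (τ - x) := by
        simpa using integral_comp_sub_left (a := 0) (b := τ) (fun x => K x * g (τ - x)) τ
    _ = ∫ x in 0..τ, (g 0 * K x + K x * ∫ r in 0..τ - x, ψ r) := by
        refine integral_congr fun x hx => ?_
        rw [uIcc_of_le hτ] at hx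
        rw [hg (τ - x) ⟨by linarith [hx.2], by linarith [hx.1]⟩]
        ring
    _ = g 0 * (∫ s in 0..τ, K s) + ∫ x in 0..τ, K x * ∫ r in 0..τ - x, ψ r := by
        rw [integral_add (hK'.const_mul _) hKψ, intervalIntegral.integral_const_mul]
    _ = g 0 * (∫ s in 0..τ, K s) + ∫ x in 0..τ, ∫ y in x..τ, K x * ψ (y - x) := by
        simp only [intervalIntegral.integral_const_mul, integral_comp_sub_right, sub_self]
    _ = g 0 * (∫ s in 0..τ, K s) + ∫ y in 0..τ, ∫ x in 0..y, K x * ψ (y - x) := by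
        rw [integral_integral_swap_triangle hτ (integrableOn_mul_comp_sub hK hψ)]

theorem hasDerivAt_integral_comp_sub_mul_of_primitive {t : ℝ} (hK : IntegrableOn K (Ioc 0 T))
    (hKc : ContinuousOn K (Ioo 0 T)) (hψ : Continuous ψ)
    (hg : ∀ y ∈ Icc 0 T, g y = g 0 + ∫ r in 0..y, ψ r) (ht : t ∈ Ioo 0 T) :
    HasDerivAt (fun τ => ∫ s in 0..τ, K (τ - s) * g s)
      (g 0 * K t + ∫ x in 0..t, K x * ψ (t - x)) t := by
  have hΦ := continuousOn_integral_mul_comp_sub hK hψ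
  have hKt : HasDerivAt (fun τ => ∫ s in 0..τ, K s) (K t) t :=
    integral_hasDerivAt_right
      ((intervalIntegrable_iff_integrableOn_Ioc_of_le ht.1.le).2
        (hK.mono_set (Ioc_subset_Ioc_right ht.2.le)))
      (hKc.stronglyMeasurableAtFilter isOpen_Ioo t ht) (hKc.continuousAt (Ioo_mem_nhds ht.1 ht.2))
  have hΦt := integral_hasDerivAt_right
      ((hΦ.mono (Icc_subset_Ico_right ht.2)).intervalIntegrable_of_Icc ht.1.le)
      ((hΦ.mono Ioo_subset_Ico_self).stronglyMeasurableAtFilter isOpen_Ioo t ht)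
      (hΦ.continuousAt (Ico_mem_nhds ht.1 ht.2))
  refine ((hKt.const_mul (g 0)).add hΦt).congr_of_eventuallyEq ?_
  filter_upwards [Ioo_mem_nhds ht.1 ht.2] with τ hτ
  exact integral_comp_sub_mul_eq hτ.1.le (hK.mono_set (Ioc_subset_Ioc_right hτ.2.le)) hψ
    fun y hy => hg y ⟨hy.1, hy.2.trans hτ.2.le⟩

theorem hasDerivAt_integral_comp_sub_mul {t : ℝ} (hK : IntegrableOn K (Ioc 0 T))
    (hKc : ContinuousOn K (Ioo 0 T)) (hg : ContDiffOn ℝ 1 g (Icc 0 T)) (ht : t ∈ Ioo 0 T) :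
    HasDerivAt (fun τ => ∫ s in 0..τ, K (τ - s) * g s)
      (g 0 * K t + ∫ s in 0..t, K s * deriv g (t - s)) t := by
  have hT : 0 ≤ T := ht.1.le.trans ht.2.le
  set ψ := fun y => derivWithin g (Icc 0 T) (projIcc 0 T hT y)
  have hψ : Continuous ψ :=
    (hg.continuousOn_derivWithin (uniqueDiffOn_Icc (ht.1.trans ht.2)) le_rfl).comp_continuous
      (continuous_subtype_val.comp continuous_projIcc) fun y => (projIcc 0 T hT y).2
  have hderiv : ∀ y ∈ Ioo 0 T, HasDerivAt g (ψ y) y := fun y hy => by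
    simp only [ψ, projIcc_of_mem hT (Ioo_subset_Icc_self hy)]
    exact (hg.differentiableOn one_ne_zero y (Ioo_subset_Icc_self hy)).hasDerivWithinAt.hasDerivAt
      (Icc_mem_nhds hy.1 hy.2)
  have hprim : ∀ y ∈ Icc 0 T, g y = g 0 + ∫ r in 0..y, ψ r := fun y hy => by
    rw [integral_eq_sub_of_hasDeriv_right_of_le hy.1
      (hg.continuousOn.mono (Icc_subset_Icc_right hy.2))
      (fun x hx => (hderiv x ⟨hx.1, hx.2.trans_le hy.2⟩).hasDerivWithinAt)
      (hψ.intervalIntegrable _ _)]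
    ring
  convert hasDerivAt_integral_comp_sub_mul_of_primitive hK hKc hψ hprim ht using 2
  -- at `x = t` the value `deriv g 0` is junk and need not equal `ψ 0`
  refine integral_congr_ae ?_
  filter_upwards [Measure.ae_ne volume t] with x hxt hx
  rw [uIoc_of_le ht.1.le] at hx
  rw [(hderiv (t - x) ⟨sub_pos.2 (lt_of_le_of_ne hx.2 hxt), by linarith [hx.1, ht.2]⟩).deriv]

end CausalConvolution

theorem deriv_fractional_convolution_general (α lam T : ℝ) (hα : α ∈ Set.Ioo (0:ℝ) 1)
    (g : ℝ → ℝ) (hg : ContDiffOn ℝ 1 g (Set.Icc 0 T))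
    (t : ℝ) (ht : t ∈ Set.Ioo 0 T) :
    HasDerivAt
      (fun τ : ℝ => ∫ s in (0:ℝ)..τ, (τ - s) ^ (α - 1) * ML α α (-lam * (τ - s) ^ α) * g s)
      (g 0 * t ^ (α - 1) * ML α α (-lam * t ^ α)
        + ∫ s in (0:ℝ)..t, s ^ (α - 1) * ML α α (-lam * s ^ α) * deriv g (t - s)) t := by
  have h := hasDerivAt_integral_comp_sub_mul (integrableOn_rpow_mul_ML hα.1 hα.2 lam T)
    ((continuousOn_rpow_mul_ML hα.1 hα.2 lam).mono Ioo_subset_Ioi_self) hg ht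
  rwa [← mul_assoc] at h

theorem deriv_fractional_convolution (α lam T : ℝ) (hα : α ∈ Set.Ioo (0:ℝ) 1)
    (hlam : 0 ≤ lam) (hT : 0 < T) (g : ℝ → ℝ) (hg : ContDiffOn ℝ 1 g (Set.Icc 0 T))
    (t : ℝ) (ht : t ∈ Set.Ioo 0 T) :
    HasDerivAt
      (fun τ : ℝ => ∫ s in (0:ℝ)..τ, (τ - s) ^ (α - 1) * ML α α (-lam * (τ - s) ^ α) * g s)
      (g 0 * t ^ (α - 1) * ML α α (-lam * t ^ α)
        + ∫ s in (0:ℝ)..t, s ^ (α - 1) * ML α α (-lam * s ^ α) * deriv g (t - s)) t :=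
  deriv_fractional_convolution_general α lam T hα g hg t ht
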